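/- arXiv:0708.3767 — 3 statements merged into one kernel-verified Lean document; each statement's English description precedes it below -/
import Mathlib

section
/- With σ₁, σ₂, σ₃ chosen as in the case distinction, in all of the cases I, II, III one has: (i) d(e,σ₂) = l(σ₂); (ii) d(e,σ₃) = l(σ₃); (iii) d(σ₁,σ_k) ≥ l(σ_k) for k ∈ {2,3}; and (iv) d(σ₂,σ₃) ≥ l(σ₃) in cases I and II, while d(σ₂,σ₃) ≥ l(σ₁) in case III. -/
open MeasureTheory Filter ProbabilityTheory Topology
open scoped ENNReal

noncomputable section

/-- Finitely supported lamp configurations on `G`. -/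
abbrev Config (G : Type*) := G →₀ ZMod 2

variable {G : Type*} [Group G]

/-- The shifted configuration `(xη)(w) = η(x⁻¹ w)`. -/
def shiftConfig (x : G) (η : Config G) : Config G :=
  Finsupp.mapDomain (fun w => x * w) η

/-- Multiplication in the wreath product `ℤ₂ ≀ G`. -/
def llMul (z₁ z₂ : Config G × G) : Config G × G :=
  (z₁.1 + shiftConfig z₁.2 z₂.1, z₁.2 * z₂.2)

/-- Inversion in the wreath product `ℤ₂ ≀ G`. -/
def llInv (z : Config G × G) : Config G × G :=
  (shiftConfig z.2⁻¹ z.1, z.2⁻¹)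

/-- The identity `(𝟎, e)` of the wreath product. -/
def llOne (G : Type*) [Group G] : Config G × G := (0, 1)

/-- The word metric on `G` induced by the generating set `S` and the lengths `l`. -/
def wordDist (S : Set G) (l : G → ℝ) (x y : G) : ℝ :=
  sInf {r | ∃ (n : ℕ) (f : Fin n → G), (∀ i, f i ∈ S) ∧ y = x * (List.ofFn f).prod ∧
    r = ∑ i, l (f i)}

/-- The minimal length of a travelling salesman tour from `e` to `x` visiting all of
`supp η`. -/
def dTS (S : Set G) (l : G → ℝ) (η : Config G) (x : G) : ℝ :=
  sInf {r | ∃ (n : ℕ) (p : Fin (n + 1) → G), p 0 = 1 ∧ p (Fin.last n) = x ∧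
    (∀ i : Fin n, (p i.castSucc)⁻¹ * p i.succ ∈ S) ∧
    (↑η.support : Set G) ⊆ Set.range p ∧
    r = ∑ i : Fin n, l ((p i.castSucc)⁻¹ * p i.succ)}

instance : MeasurableSpace (Config G × G) := ⊤

/-- The data of a lamplighter random walk on `ℤ₂ ≀ G`. -/
structure LLRW (G : Type*) [Group G] (Ω : Type*) [MeasurableSpace Ω] (P : Measure Ω) where
  /-- generating set -/
  S : Finset G
  /-- lengths of generators -/
  l : G → ℝ
  one_not_mem : (1 : G) ∉ S
  S_symm : ∀ s ∈ S, s⁻¹ ∈ S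
  l_pos : ∀ s ∈ S, 0 < l s
  l_symm : ∀ s ∈ S, l s⁻¹ = l s
  S_gen : ∀ x : G, ∃ (n : ℕ) (f : Fin n → G), (∀ i, f i ∈ S) ∧ x = (List.ofFn f).prod
  /-- the step distribution -/
  μ : PMF (Config G × G)
  /-- increments of the walk -/
  inc : ℕ → Ω → Config G × G
  /-- the lamplighter random walk -/
  Z : ℕ → Ω → Config G × G
  Z_zero : ∀ ω, Z 0 ω = llOne G
  Z_succ : ∀ n ω, Z (n + 1) ω = llMul (Z n ω) (inc n ω)
  indep : iIndepFun inc P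
  ident : ∀ n, Measure.map (inc n) P = μ.toMeasure
  μ_gen : ∀ z : Config G × G, ∃ zs : List (Config G × G),
    (∀ w ∈ zs, w ∈ μ.support ∨ llInv w ∈ μ.support) ∧ z = zs.foldl llMul (llOne G)
  /-- bound on the lamp range of one step -/
  R : ℝ
  R_nonneg : 0 ≤ R
  lampRange : ∀ z ∈ μ.support, ∀ y ∈ z.1.support, wordDist (S : Set G) l 1 y ≤ R
  firstMoment : Summable fun z : Config G × G => wordDist (S : Set G) l 1 z.2 * (μ z).toReal

namespace LLRW

variable {Ω : Type*} [MeasurableSpace Ω] {P : Measure Ω}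

/-- position of the lamplighter at time `n` -/
def X (st : LLRW G Ω P) (n : ℕ) (ω : Ω) : G := (st.Z n ω).2

/-- lamp configuration at time `n` -/
def lamps (st : LLRW G Ω P) (n : ℕ) (ω : Ω) : Config G := (st.Z n ω).1

/-- transience of the projection of the walk on `G` -/
def Transient (st : LLRW G Ω P) : Prop := P {ω | ∃ n ≥ 1, st.X n ω = 1} < 1

end LLRW

end

noncomputable section

variable {G : Type*} [Group G]

/-- `s k` is not in the subgroup generated by the earlier generators `s 0, …, s (k−1)`. -/
def newGen (s : ℕ → G) (k : ℕ) : Prop :=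
  s k ∉ Subgroup.closure (s '' {j | j < k})

/-- Case I of the choice of `σ₁, σ₂, σ₃`: `s₁ ≠ s₁⁻¹`, `σ₁ = s₁`, `σ₂ = s₁⁻¹` and `σ₃ = s_i`
with `i` minimal (`i ≥ 2` when `1`-indexed) such that `s_i ∉ ⟨s₁⁻¹, s₁, …, s_{i−1}⟩`. -/
def CaseI (s : ℕ → G) (r : ℕ) (σ₁ σ₂ σ₃ : G) : Prop :=
  s 0 ≠ (s 0)⁻¹ ∧ σ₁ = s 0 ∧ σ₂ = (s 0)⁻¹ ∧
    ∃ i, 1 ≤ i ∧ i < r ∧ σ₃ = s i ∧ newGen s i ∧ ∀ k, 1 ≤ k → k < i → ¬ newGen s k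

/-- Case II: `s₁ = s₁⁻¹`, `s₂ = s₂⁻¹`, `σ₁ = s₁`, `σ₂ = s₂` and `σ₃ = s_i` with `i` minimal
(`i ≥ 3` when `1`-indexed) such that `s_i ∉ ⟨s₁, …, s_{i−1}⟩`. -/
def CaseII (s : ℕ → G) (r : ℕ) (σ₁ σ₂ σ₃ : G) : Prop :=
  s 0 = (s 0)⁻¹ ∧ s 1 = (s 1)⁻¹ ∧ σ₁ = s 0 ∧ σ₂ = s 1 ∧
    ∃ i, 2 ≤ i ∧ i < r ∧ σ₃ = s i ∧ newGen s i ∧ ∀ k, 2 ≤ k → k < i → ¬ newGen s k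

/-- Case III: `s₁ = s₁⁻¹`, `s₂ ≠ s₂⁻¹`, `σ₁ = s₁`, `σ₂ = s₂`, `σ₃ = s₂⁻¹`. -/
def CaseIII (s : ℕ → G) (σ₁ σ₂ σ₃ : G) : Prop :=
  s 0 = (s 0)⁻¹ ∧ s 1 ≠ (s 1)⁻¹ ∧ σ₁ = s 0 ∧ σ₂ = s 1 ∧ σ₃ = (s 1)⁻¹

end


section Helpers

variable {G : Type*} [Group G]

lemma helper_mem_two {a x : G} (ha : a * a = 1)
    (hx : x ∈ Subgroup.closure ({a} : Set G)) : x = 1 ∨ x = a := by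
  rw [Subgroup.mem_closure_singleton] at hx
  obtain ⟨n, rfl⟩ := hx
  have h2 : a ^ (2 : ℤ) = 1 := by rw [zpow_two]; exact ha
  have key : a ^ n = a ^ (n % 2) := by
    conv_lhs => rw [← Int.emod_add_mul_ediv n 2]
    rw [zpow_add, zpow_mul, h2, one_zpow, mul_one]
  rcases Int.emod_two_eq n with h | h <;> rw [key, h] <;> simp

lemma helper_wd_le_single (S : Finset G) (l : G → ℝ) (hlpos : ∀ t ∈ S, 0 < l t)
    {t : G} (ht : t ∈ S) : wordDist (↑S) l 1 t ≤ l t := by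
  apply csInf_le
  · refine ⟨0, ?_⟩
    rintro ρ ⟨n, f, hf, hy, rfl⟩
    exact Finset.sum_nonneg fun j _ => (hlpos _ (hf j)).le
  · exact ⟨1, fun _ => t, fun i => ht, by simp, by simp⟩

lemma helper_key_lb (S : Finset G) (l : G → ℝ) (r : ℕ) (s : ℕ → G)
    (henum : ∀ x, x ∈ S ↔ ∃ i < r, s i = x)
    (hmono : ∀ i j, i ≤ j → j < r → l (s i) ≤ l (s j))
    (hlpos : ∀ t ∈ S, 0 < l t)
    (hgen : ∀ x : G, ∃ (n : ℕ) (f : Fin n → G), (∀ i, f i ∈ S) ∧ x = (List.ofFn f).prod)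
    (i : ℕ) (hir : i < r) (x y : G)
    (hxy : x⁻¹ * y ∉ Subgroup.closure (s '' {j | j < i})) :
    l (s i) ≤ wordDist (↑S) l x y := by
  apply le_csInf
  · obtain ⟨n, f, hf, hp⟩ := hgen (x⁻¹ * y)
    exact ⟨∑ k, l (f k), n, f, hf, by rw [← hp, mul_inv_cancel_left], rfl⟩
  rintro ρ ⟨n, f, hf, hy, rfl⟩
  by_cases hall : ∀ k, l (f k) < l (s i)
  · exfalso
    apply hxy
    have hmem : (List.ofFn f).prod ∈ Subgroup.closure (s '' {j | j < i}) := by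
      apply Subgroup.list_prod_mem
      intro t ht
      rw [List.mem_ofFn] at ht
      obtain ⟨k, rfl⟩ := ht
      obtain ⟨j, hjr, hjs⟩ := (henum (f k)).1 (hf k)
      have hji : j < i := by
        by_contra hji
        exact absurd (hjs ▸ hmono i j (le_of_not_gt hji) hjr) (not_le.2 (hall k))
      exact Subgroup.subset_closure ⟨j, hji, hjs⟩
    rw [hy, inv_mul_cancel_left]
    exact hmem
  · push_neg at hall
    obtain ⟨k, hk⟩ := hall
    calc l (s i) ≤ l (f k) := hk
    _ ≤ ∑ j, l (f j) :=
      Finset.single_le_sum (fun j _ => (hlpos _ (hf j)).le) (Finset.mem_univ k)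

end Helpers

/-- distance identities and lower bounds for the chosen generators
`σ₁, σ₂, σ₃` in each of the cases I, II, III. -/
theorem statement_6 {G : Type*} [Group G] [Infinite G]
    (S : Finset G) (l : G → ℝ) (r : ℕ) (hr : 3 ≤ r) (s : ℕ → G)
    (henum : ∀ x, x ∈ S ↔ ∃ i < r, s i = x)
    (hinj : ∀ i < r, ∀ j < r, s i = s j → i = j)
    (hmono : ∀ i j, i ≤ j → j < r → l (s i) ≤ l (s j))
    (hone : (1 : G) ∉ S) (hsymm : ∀ t ∈ S, t⁻¹ ∈ S)
    (hlpos : ∀ t ∈ S, 0 < l t) (hlsymm : ∀ t ∈ S, l t⁻¹ = l t)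
    (hgen : ∀ x : G, ∃ (n : ℕ) (f : Fin n → G), (∀ i, f i ∈ S) ∧ x = (List.ofFn f).prod)
    (hno2 : ∀ t ∈ S, ∀ t' ∈ S, t⁻¹ ∈ ({t, t'} : Set G) → t'⁻¹ ∈ ({t, t'} : Set G) →
      Subgroup.closure ({t, t'} : Set G) ≠ ⊤)
    (σ₁ σ₂ σ₃ : G)
    (hcase : CaseI s r σ₁ σ₂ σ₃ ∨ CaseII s r σ₁ σ₂ σ₃ ∨ CaseIII s σ₁ σ₂ σ₃)
    :
    wordDist (↑S) l 1 σ₂ = l σ₂ ∧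
    wordDist (↑S) l 1 σ₃ = l σ₃ ∧
    (l σ₂ ≤ wordDist (↑S) l σ₁ σ₂ ∧ l σ₃ ≤ wordDist (↑S) l σ₁ σ₃) ∧
    ((CaseI s r σ₁ σ₂ σ₃ ∨ CaseII s r σ₁ σ₂ σ₃) → l σ₃ ≤ wordDist (↑S) l σ₂ σ₃) ∧
    (CaseIII s σ₁ σ₂ σ₃ → l σ₁ ≤ wordDist (↑S) l σ₂ σ₃) := by
  have h0r : 0 < r := by omega
  have h1r : 1 < r := by omega
  have hS0 : s 0 ∈ S := (henum (s 0)).2 ⟨0, h0r, rfl⟩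
  have hS1 : s 1 ∈ S := (henum (s 1)).2 ⟨1, h1r, rfl⟩
  have hs0ne1 : s 0 ≠ 1 := fun h => hone (h ▸ hS0)
  have hs1ne1 : s 1 ≠ 1 := fun h => hone (h ▸ hS1)
  have hs01 : s 0 ≠ s 1 := fun h => by simpa using hinj 0 h0r 1 h1r h
  have hmem_bot : ∀ x : G, x ∈ Subgroup.closure (s '' {j | j < 0}) → x = 1 := by
    intro x hx
    have he : (s '' {j | j < 0}) = (∅ : Set G) := by simp
    rw [he, Subgroup.closure_empty, Subgroup.mem_bot] at hx
    exact hx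
  have hsing : s '' {j | j < 1} = ({s 0} : Set G) := by
    have he : ({j | j < 1} : Set ℕ) = {0} := by ext j; simp [Nat.lt_one_iff]
    rw [he, Set.image_singleton]
  have KLB := helper_key_lb S l r s henum hmono hlpos hgen
  rcases hcase with hc | hc | hc
  · -- Case I
    obtain ⟨hne, hσ1, hσ2, i, hi1, hir, hσ3, hngen, -⟩ := hc
    subst hσ1; subst hσ2; subst hσ3
    have hS0i : (s 0)⁻¹ ∈ S := hsymm _ hS0
    have hs0mem : s 0 ∈ Subgroup.closure (s '' {j | j < i}) :=
      Subgroup.subset_closure ⟨0, hi1, rfl⟩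
    have h1 : wordDist (↑S) l 1 (s 0)⁻¹ = l (s 0)⁻¹ := by
      apply le_antisymm
      · exact helper_wd_le_single S l hlpos hS0i
      · have := KLB 0 h0r 1 (s 0)⁻¹ (by
          intro h
          exact hs0ne1 (by simpa using hmem_bot _ (by simpa using h)))
        rw [hlsymm _ hS0]; exact this
    have h2 : wordDist (↑S) l 1 (s i) = l (s i) := by
      apply le_antisymm
      · exact helper_wd_le_single S l hlpos ((henum _).2 ⟨i, hir, rfl⟩)
      · exact KLB i hir 1 (s i) (by simpa [newGen] using hngen)
    have h3a : l (s 0)⁻¹ ≤ wordDist (↑S) l (s 0) (s 0)⁻¹ := by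
      have := KLB 0 h0r (s 0) (s 0)⁻¹ (by
        intro h
        have hh := hmem_bot _ h
        have := inv_eq_of_mul_eq_one_left hh
        rw [inv_inv] at this
        exact hne this)
      rw [hlsymm _ hS0]; exact this
    have h3b : l (s i) ≤ wordDist (↑S) l (s 0) (s i) := by
      refine KLB i hir (s 0) (s i) (fun h => hngen ?_)
      have hm : s 0 * ((s 0)⁻¹ * s i) ∈ Subgroup.closure (s '' {j | j < i}) :=
        mul_mem hs0mem h
      simpa using hm
    have h4 : l (s i) ≤ wordDist (↑S) l (s 0)⁻¹ (s i) := by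
      refine KLB i hir (s 0)⁻¹ (s i) (fun h => hngen ?_)
      have hm : (s 0)⁻¹ * (((s 0)⁻¹)⁻¹ * s i) ∈ Subgroup.closure (s '' {j | j < i}) :=
        mul_mem (inv_mem hs0mem) h
      simpa using hm
    exact ⟨h1, h2, ⟨h3a, h3b⟩, fun _ => h4, fun h => absurd h.1 hne⟩
  · -- Case II
    obtain ⟨hs0, hs1, hσ1, hσ2, i, hi2, hir, hσ3, hngen, -⟩ := hc
    subst hσ1; subst hσ2; subst hσ3
    have hsq : s 0 * s 0 = 1 := by nth_rewrite 1 [hs0]; exact inv_mul_cancel (s 0)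
    have htwo : ∀ x : G, x ∈ Subgroup.closure (s '' {j | j < 1}) → x = 1 ∨ x = s 0 := by
      intro x hx; rw [hsing] at hx; exact helper_mem_two hsq hx
    have hs0mem : s 0 ∈ Subgroup.closure (s '' {j | j < i}) :=
      Subgroup.subset_closure ⟨0, show (0:ℕ) < i by omega, rfl⟩
    have hs1mem : s 1 ∈ Subgroup.closure (s '' {j | j < i}) :=
      Subgroup.subset_closure ⟨1, show (1:ℕ) < i by omega, rfl⟩
    have h1 : wordDist (↑S) l 1 (s 1) = l (s 1) := by
      apply le_antisymm
      · exact helper_wd_le_single S l hlpos hS1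
      · refine KLB 1 h1r 1 (s 1) (fun h => ?_)
        rcases htwo _ (by simpa using h) with h' | h'
        · exact hs1ne1 h'
        · exact hs01 h'.symm
    have h2 : wordDist (↑S) l 1 (s i) = l (s i) := by
      apply le_antisymm
      · exact helper_wd_le_single S l hlpos ((henum _).2 ⟨i, hir, rfl⟩)
      · exact KLB i hir 1 (s i) (by simpa [newGen] using hngen)
    have h3a : l (s 1) ≤ wordDist (↑S) l (s 0) (s 1) := by
      refine KLB 1 h1r (s 0) (s 1) (fun h => ?_)
      have hm : s 0 * ((s 0)⁻¹ * s 1) ∈ Subgroup.closure (s '' {j | j < 1}) := by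
        refine mul_mem (Subgroup.subset_closure ?_) h
        rw [hsing]; rfl
      rcases htwo _ (by simpa using hm) with h' | h'
      · exact hs1ne1 h'
      · exact hs01 h'.symm
    have h3b : l (s i) ≤ wordDist (↑S) l (s 0) (s i) := by
      refine KLB i hir (s 0) (s i) (fun h => hngen ?_)
      have hm : s 0 * ((s 0)⁻¹ * s i) ∈ Subgroup.closure (s '' {j | j < i}) :=
        mul_mem hs0mem h
      simpa using hm
    have h4 : l (s i) ≤ wordDist (↑S) l (s 1) (s i) := by
      refine KLB i hir (s 1) (s i) (fun h => hngen ?_)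
      have hm : s 1 * ((s 1)⁻¹ * s i) ∈ Subgroup.closure (s '' {j | j < i}) :=
        mul_mem hs1mem h
      simpa using hm
    exact ⟨h1, h2, ⟨h3a, h3b⟩, fun _ => h4, fun h => absurd hs1 h.2.1⟩
  · -- Case III
    obtain ⟨hs0, hs1, hσ1, hσ2, hσ3⟩ := hc
    subst hσ1; subst hσ2; subst hσ3
    have hsq : s 0 * s 0 = 1 := by nth_rewrite 1 [hs0]; exact inv_mul_cancel (s 0)
    have htwo : ∀ x : G, x ∈ Subgroup.closure (s '' {j | j < 1}) → x = 1 ∨ x = s 0 := by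
      intro x hx; rw [hsing] at hx; exact helper_mem_two hsq hx
    have hs1inv : (s 1)⁻¹ ≠ 1 := by simpa using hs1ne1
    have hs1inv0 : (s 1)⁻¹ ≠ s 0 := by
      intro h
      apply hs01
      rw [← inv_inv (s 1), h, ← hs0]
    have h1 : wordDist (↑S) l 1 (s 1) = l (s 1) := by
      apply le_antisymm
      · exact helper_wd_le_single S l hlpos hS1
      · refine KLB 1 h1r 1 (s 1) (fun h => ?_)
        rcases htwo _ (by simpa using h) with h' | h'
        · exact hs1ne1 h'
        · exact hs01 h'.symm
    have h2 : wordDist (↑S) l 1 (s 1)⁻¹ = l (s 1)⁻¹ := by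
      apply le_antisymm
      · exact helper_wd_le_single S l hlpos (hsymm _ hS1)
      · have := KLB 1 h1r 1 (s 1)⁻¹ (by
          intro h
          rcases htwo _ (by simpa using h) with h' | h'
          · exact hs1ne1 h'
          · exact hs01 h'.symm)
        rw [hlsymm _ hS1]; exact this
    have h3a : l (s 1) ≤ wordDist (↑S) l (s 0) (s 1) := by
      refine KLB 1 h1r (s 0) (s 1) (fun h => ?_)
      have hm : s 0 * ((s 0)⁻¹ * s 1) ∈ Subgroup.closure (s '' {j | j < 1}) := by
        refine mul_mem (Subgroup.subset_closure ?_) h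
        rw [hsing]; rfl
      rcases htwo _ (by simpa using hm) with h' | h'
      · exact hs1ne1 h'
      · exact hs01 h'.symm
    have h3b : l (s 1)⁻¹ ≤ wordDist (↑S) l (s 0) (s 1)⁻¹ := by
      have := KLB 1 h1r (s 0) (s 1)⁻¹ (by
        intro h
        have hm : s 0 * ((s 0)⁻¹ * (s 1)⁻¹) ∈ Subgroup.closure (s '' {j | j < 1}) := by
          refine mul_mem (Subgroup.subset_closure ?_) h
          rw [hsing]; rfl
        rcases htwo _ (by simpa using hm) with h' | h'
        · exact hs1ne1 h'
        · exact hs01 h'.symm)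
      rw [hlsymm _ hS1]; exact this
    have h5 : l (s 0) ≤ wordDist (↑S) l (s 1) (s 1)⁻¹ := by
      refine KLB 0 h0r (s 1) (s 1)⁻¹ (fun h => ?_)
      have hh := hmem_bot _ h
      have := inv_eq_of_mul_eq_one_left hh
      rw [inv_inv] at this
      exact hs1 this
    refine ⟨h1, h2, ⟨h3a, h3b⟩, ?_, fun _ => h5⟩
    rintro (h | h)
    · exact absurd hs0 h.1
    · exact absurd h.2.1 hs1
end

section
/- With σ₁, σ₂, σ₃ chosen as in the case distinction for G = ℤ, there is some ε₀ > 0 such that: in Case I, (i) d(0,1) = l(1), (ii) d(s,1) ≥ l(1) − l(s) + ε₀, (iii) d(−s,1) ≥ l(1) − l(s) + ε₀; and in Case II, (i) d(0,s) = l(s), (ii) d(1,s) ≥ l(s) − l(1) + ε₀, (iii) d(−1,s) ≥ l(s) − l(1) + ε₀. -/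
open MeasureTheory Filter ProbabilityTheory Topology
open scoped ENNReal

noncomputable section

/-- The word metric on `ℤ` induced by the generating set `S` and the lengths `l`. -/
def wordDistZ (S : Set ℤ) (l : ℤ → ℝ) (x y : ℤ) : ℝ :=
  sInf {r | ∃ (n : ℕ) (f : Fin n → ℤ), (∀ i, f i ∈ S) ∧ y = x + ∑ i, f i ∧ r = ∑ i, l (f i)}

/-- The minimal length of a travelling salesman tour in `ℤ` from `0` to `x` visiting all of
`supp η`. -/
def dTSZ (S : Set ℤ) (l : ℤ → ℝ) (η : ℤ →₀ ZMod 2) (x : ℤ) : ℝ :=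
  sInf {r | ∃ (n : ℕ) (p : Fin (n + 1) → ℤ), p 0 = 0 ∧ p (Fin.last n) = x ∧
    (∀ i : Fin n, p i.succ - p i.castSucc ∈ S) ∧
    (↑η.support : Set ℤ) ⊆ Set.range p ∧
    r = ∑ i : Fin n, l (p i.succ - p i.castSucc)}

/-- Case I of the choice of `σ₁, σ₂, σ₃` for `G = ℤ`: there is `s ∈ S ∖ {±1}` with
`r₁ = l(s) < l(1)`; then `σ₁ = s`, `σ₂ = −s`, `σ₃ = 1`. -/
def CaseIZ (S : Finset ℤ) (l : ℤ → ℝ) (s σ₁ σ₂ σ₃ : ℤ) : Prop :=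
  s ∈ S ∧ s ≠ 1 ∧ s ≠ -1 ∧ (∀ t ∈ S, l s ≤ l t) ∧ l s < l 1 ∧
    σ₁ = s ∧ σ₂ = -s ∧ σ₃ = 1

/-- Case II for `G = ℤ`: otherwise, `σ₁ = 1`, `σ₂ = −1` and `σ₃ = s` with `s ∈ ℕ ∩ (S ∖ {1})`,
`l(s) < s·l(1)`, and `l(s)` minimal among all `s' ∈ S` with `l(s') < |s'|·l(1)`. -/
def CaseIIZ (S : Finset ℤ) (l : ℤ → ℝ) (s σ₁ σ₂ σ₃ : ℤ) : Prop :=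
  (¬ ∃ t ∈ S, t ≠ 1 ∧ t ≠ -1 ∧ (∀ u ∈ S, l t ≤ l u) ∧ l t < l 1) ∧
    0 < s ∧ s ∈ S ∧ s ≠ 1 ∧ l s < (s : ℝ) * l 1 ∧
    (∀ t ∈ S, l t < |(t : ℝ)| * l 1 → l s ≤ l t) ∧
    σ₁ = 1 ∧ σ₂ = -1 ∧ σ₃ = s

end


/-- Turn a word into a path of partial sums. -/
lemma exists_path_of_word (x : ℤ) (n : ℕ) (f : Fin n → ℤ) :
    ∃ p : Fin (n + 1) → ℤ, p 0 = x ∧ p (Fin.last n) = x + ∑ i, f i ∧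
      ∀ i : Fin n, p i.succ - p i.castSucc = f i := by
  refine ⟨fun j => x + ∑ i : Fin n, if (i : ℕ) < (j : ℕ) then f i else 0, ?_, ?_, ?_⟩
  · simp
  · have : ∀ i : Fin n, ((if (i : ℕ) < ((Fin.last n : Fin (n+1)) : ℕ) then f i else 0) = f i) := by
      intro i; simp [Fin.last, i.is_lt]
    simp only [Finset.sum_congr rfl (fun i _ => this i)]
  · intro i
    have key : ∀ k : Fin n,
        (if (k : ℕ) < ((i.succ : Fin (n+1)) : ℕ) then f k else 0)
          - (if (k : ℕ) < ((i.castSucc : Fin (n+1)) : ℕ) then f k else 0)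
        = if k = i then f k else 0 := by
      intro k
      simp only [Fin.val_succ, Fin.coe_castSucc, Fin.ext_iff]
      split_ifs with a b c
      all_goals try (exfalso; omega)
      all_goals ring
    have : (∑ k : Fin n, if (k : ℕ) < ((i.succ : Fin (n+1)) : ℕ) then f k else 0)
        - (∑ k : Fin n, if (k : ℕ) < ((i.castSucc : Fin (n+1)) : ℕ) then f k else 0)
        = f i := by
      rw [← Finset.sum_sub_distrib]
      simp only [Finset.sum_congr rfl (fun k _ => key k)]
      simp
    simp only []
    linarith [this]

lemma wordSet_nonempty (S : Finset ℤ) (l : ℤ → ℝ) (h1 : (1:ℤ) ∈ S) (hm1 : (-1:ℤ) ∈ S)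
    (x y : ℤ) :
    {r | ∃ (n : ℕ) (f : Fin n → ℤ), (∀ i, f i ∈ (S : Set ℤ)) ∧ y = x + ∑ i, f i ∧
      r = ∑ i, l (f i)}.Nonempty := by
  refine ⟨∑ _i : Fin (y - x).natAbs, l (if 0 ≤ y - x then 1 else -1),
    (y - x).natAbs, fun _ => if 0 ≤ y - x then 1 else -1, ?_, ?_, rfl⟩
  · intro i; split_ifs <;> simpa
  · rw [Finset.sum_const, Finset.card_univ, Fintype.card_fin]
    split_ifs with h
    · simp only [nsmul_eq_mul, mul_one, Int.natCast_natAbs, abs_of_nonneg h]; ring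
    · simp only [nsmul_eq_mul, mul_neg_one, Int.natCast_natAbs,
        abs_of_nonpos (le_of_lt (not_le.1 h))]; ring

/-- Gap lemma. -/
lemma gap_lemma (S : Finset ℤ) (l : ℤ → ℝ) (hlpos : ∀ t ∈ S, 0 < l t)
    (h1 : (1:ℤ) ∈ S) (x y : ℤ) (c : ℝ)
    (hgt : ∀ (n : ℕ) (f : Fin n → ℤ), (∀ i, f i ∈ S) → y = x + ∑ i, f i →
      c < ∑ i, l (f i)) :
    ∃ ε : ℝ, 0 < ε ∧ ∀ r ∈ {r | ∃ (n : ℕ) (f : Fin n → ℤ), (∀ i, f i ∈ (S : Set ℤ)) ∧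
      y = x + ∑ i, f i ∧ r = ∑ i, l (f i)}, c + ε ≤ r := by
  set T := {r | ∃ (n : ℕ) (f : Fin n → ℤ), (∀ i, f i ∈ (S : Set ℤ)) ∧
      y = x + ∑ i, f i ∧ r = ∑ i, l (f i)} with hT
  have hSne : S.Nonempty := ⟨1, h1⟩
  set r₁ := S.inf' hSne l with hr₁
  have hr₁pos : 0 < r₁ := by
    rw [hr₁, Finset.lt_inf'_iff]; exact fun t ht => hlpos t ht
  obtain ⟨N, hN⟩ := exists_nat_ge ((c + 1) / r₁)
  have hNc : c + 1 ≤ N * r₁ := by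
    rw [div_le_iff₀ hr₁pos] at hN; linarith
  have hfin : {r ∈ T | r ≤ c + 1}.Finite := by
    have hsub : {r ∈ T | r ≤ c + 1} ⊆ ⋃ n : Fin (N + 1),
        (fun f : Fin n → ℤ => ∑ i, l (f i)) '' {f | ∀ i, f i ∈ (S : Set ℤ)} := by
      rintro r ⟨⟨n, f, hf, -, rfl⟩, hle⟩
      have hlow : (n : ℝ) * r₁ ≤ ∑ i, l (f i) := by
        calc (n : ℝ) * r₁ = ∑ _i : Fin n, r₁ := by
              rw [Finset.sum_const, Finset.card_univ, Fintype.card_fin, nsmul_eq_mul]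
          _ ≤ ∑ i, l (f i) := Finset.sum_le_sum fun i _ =>
              Finset.inf'_le l (hf i)
      have hnN : n ≤ N := by
        by_contra h
        push_neg at h
        have : (N : ℝ) * r₁ < (n : ℝ) * r₁ := by
          apply mul_lt_mul_of_pos_right _ hr₁pos
          exact_mod_cast h
        linarith
      exact Set.mem_iUnion.2 ⟨⟨n, Nat.lt_succ_of_le hnN⟩, ⟨f, hf, rfl⟩⟩
    apply Set.Finite.subset _ hsub
    apply Set.finite_iUnion
    intro n
    apply Set.Finite.image
    have : {f : Fin n → ℤ | ∀ i, f i ∈ (S : Set ℤ)} = Set.univ.pi fun _ => (S : Set ℤ) := by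
      ext f; simp [Set.mem_pi]
    rw [this]
    exact Set.Finite.pi fun _ => S.finite_toSet
  have hgt' : ∀ r ∈ T, c < r := by
    rintro r ⟨n, f, hf, hy, rfl⟩
    exact hgt n f (fun i => hf i) hy
  rcases Set.eq_empty_or_nonempty {r ∈ T | r ≤ c + 1} with hA | hA
  · refine ⟨1, one_pos, fun r hr => ?_⟩
    by_contra h
    push_neg at h
    exact Set.eq_empty_iff_forall_notMem.1 hA r ⟨hr, le_of_lt h⟩
  · have hBne : hfin.toFinset.Nonempty := by
      rwa [Set.Finite.toFinset_nonempty]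
    have hmT : hfin.toFinset.min' hBne ∈ T ∧ hfin.toFinset.min' hBne ≤ c + 1 := by
      have := Finset.min'_mem _ hBne
      rwa [Set.Finite.mem_toFinset] at this
    have hcm : c < hfin.toFinset.min' hBne := hgt' _ hmT.1
    refine ⟨min 1 (hfin.toFinset.min' hBne - c), lt_min one_pos (by linarith), fun r hr => ?_⟩
    by_cases hrc : r ≤ c + 1
    · have hrB : r ∈ hfin.toFinset := by rw [Set.Finite.mem_toFinset]; exact ⟨hr, hrc⟩
      have := Finset.min'_le _ r hrB
      have h2 : min 1 (hfin.toFinset.min' hBne - c) ≤ hfin.toFinset.min' hBne - c :=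
        min_le_right _ _
      linarith
    · push_neg at hrc
      have : min 1 (hfin.toFinset.min' hBne - c) ≤ 1 := min_le_left _ _
      linarith


/-- distance identities and lower bounds for the generators chosen in the
case distinction for `G = ℤ`. -/
theorem statement_14
    (S : Finset ℤ) (l : ℤ → ℝ)
    (h1 : (1 : ℤ) ∈ S) (hm1 : (-1 : ℤ) ∈ S) (hcard : 3 ≤ S.card) (h0S : (0 : ℤ) ∉ S)
    (hsymm : ∀ t ∈ S, -t ∈ S) (hlpos : ∀ t ∈ S, 0 < l t) (hlsymm : ∀ t ∈ S, l (-t) = l t)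
    (hexist : ∃ t ∈ S, t ≠ 1 ∧ t ≠ -1 ∧ l t < |(t : ℝ)| * l 1)
    (hd01 : wordDistZ (↑S) l 0 1 = l 1)
    (huniq : ∀ (n : ℕ) (p : Fin (n + 1) → ℤ), p 0 = 0 → p (Fin.last n) = 1 →
      (∀ i : Fin n, p i.succ - p i.castSucc ∈ S) →
      (∑ i : Fin n, l (p i.succ - p i.castSucc)) ≤ l 1 → n = 1)
    (s σ₁ σ₂ σ₃ : ℤ)
    (hcase : CaseIZ S l s σ₁ σ₂ σ₃ ∨ CaseIIZ S l s σ₁ σ₂ σ₃)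
    :
    ∃ ε₀ : ℝ, 0 < ε₀ ∧
      (CaseIZ S l s σ₁ σ₂ σ₃ →
        wordDistZ (↑S) l 0 1 = l 1 ∧
        l 1 - l s + ε₀ ≤ wordDistZ (↑S) l s 1 ∧
        l 1 - l s + ε₀ ≤ wordDistZ (↑S) l (-s) 1) ∧
      (CaseIIZ S l s σ₁ σ₂ σ₃ →
        wordDistZ (↑S) l 0 s = l s ∧
        l s - l 1 + ε₀ ≤ wordDistZ (↑S) l 1 s ∧
        l s - l 1 + ε₀ ≤ wordDistZ (↑S) l (-1) s) := by
  have hexcl : ¬ (CaseIZ S l s σ₁ σ₂ σ₃ ∧ CaseIIZ S l s σ₁ σ₂ σ₃) := by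
    rintro ⟨⟨hsS, hs1, hsm1, hmin, hlt, -, -, -⟩, ⟨hno, -⟩⟩
    exact hno ⟨s, hsS, hs1, hsm1, hmin, hlt⟩
  have l1pos : 0 < l 1 := hlpos 1 h1
  rcases hcase with hI | hII
  · -- Case I
    obtain ⟨hsS, hs1, hsm1, hmin, hlt, -, -, -⟩ := id hI
    -- strict lower bound for words from ±s to 1
    have key : ∀ (a : ℤ), a ∈ S → a ≠ 1 → l a = l s →
        ∀ (n : ℕ) (f : Fin n → ℤ), (∀ i, f i ∈ S) → (1 : ℤ) = a + ∑ i, f i →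
        l 1 - l s < ∑ i, l (f i) := by
      intro a haS ha1 hla n f hf hsum
      by_contra h
      push_neg at h
      obtain ⟨p, hp0, hpl, hstep⟩ := exists_path_of_word 0 (n + 1) (Fin.cons a f)
      have hplast : p (Fin.last (n + 1)) = 1 := by
        rw [hpl, Fin.sum_cons, ← hsum, zero_add]
      have hmem : ∀ i : Fin (n + 1), p i.succ - p i.castSucc ∈ S := by
        intro i
        rw [hstep i]
        induction i using Fin.cases with
        | zero => simpa using haS
        | succ j => simpa using hf j
      have hsum' : ∑ i : Fin (n + 1), l (p i.succ - p i.castSucc) ≤ l 1 := by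
        rw [Finset.sum_congr rfl (fun i _ => by rw [hstep i]), Fin.sum_univ_succ]
        simp only [Fin.cons_zero, Fin.cons_succ, hla]
        linarith
      have hn := huniq (n + 1) p hp0 hplast hmem hsum'
      have hn0 : n = 0 := by omega
      subst hn0
      simp only [Finset.univ_eq_empty, Finset.sum_empty, add_zero] at hsum
      exact ha1 hsum.symm
    obtain ⟨ε₁, hε₁pos, hε₁⟩ := gap_lemma S l hlpos h1 s 1 (l 1 - l s)
      (key s hsS hs1 rfl)
    obtain ⟨ε₂, hε₂pos, hε₂⟩ := gap_lemma S l hlpos h1 (-s) 1 (l 1 - l s)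
      (key (-s) (hsymm s hsS) (by omega) (hlsymm s hsS))
    refine ⟨min ε₁ ε₂, lt_min hε₁pos hε₂pos, fun _ => ⟨hd01, ?_, ?_⟩,
      fun hII' => absurd ⟨hI, hII'⟩ hexcl⟩
    · refine le_csInf (wordSet_nonempty S l h1 hm1 s 1) fun r hr => ?_
      have := hε₁ r hr
      have := min_le_left ε₁ ε₂
      linarith
    · refine le_csInf (wordSet_nonempty S l h1 hm1 (-s) 1) fun r hr => ?_
      have := hε₂ r hr
      have := min_le_right ε₁ ε₂
      linarith
  · -- Case II
    obtain ⟨hno, hspos, hsS, hs1, hslt, hsmin, -, -, -⟩ := id hII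
    have hs2 : (2 : ℤ) ≤ s := by omega
    -- bound for inefficient words
    have habs : ∀ (n : ℕ) (f : Fin n → ℤ), (∀ i, f i ∈ S) →
        (∀ i, |((f i : ℤ) : ℝ)| * l 1 ≤ l (f i)) → ∀ d : ℤ, d = ∑ i, f i →
        |((d : ℤ) : ℝ)| * l 1 ≤ ∑ i, l (f i) := by
      intro n f hf hE d hd
      have hdr : ((d : ℤ) : ℝ) = ∑ i, ((f i : ℤ) : ℝ) := by
        have := congrArg (fun z : ℤ => (z : ℝ)) hd
        push_cast at this
        exact this
      calc |((d : ℤ) : ℝ)| * l 1 ≤ (∑ i, |((f i : ℤ) : ℝ)|) * l 1 := by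
            apply mul_le_mul_of_nonneg_right _ l1pos.le
            rw [hdr]
            exact Finset.abs_sum_le_sum_abs _ _
        _ = ∑ i, |((f i : ℤ) : ℝ)| * l 1 := Finset.sum_mul _ _ _
        _ ≤ ∑ i, l (f i) := Finset.sum_le_sum fun i _ => hE i
    -- generic strict lower bound: for word from b to s with (s - b : ℝ) * l 1 > l s - l 1 case
    have key2 : ∀ (b : ℤ), (l s - l 1 < |((s - b : ℤ) : ℝ)| * l 1) →
        ∀ (n : ℕ) (f : Fin n → ℤ), (∀ i, f i ∈ S) → s = b + ∑ i, f i →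
        l s - l 1 < ∑ i, l (f i) := by
      intro b hb n f hf hsum
      by_cases hE : ∃ i, l (f i) < |((f i : ℤ) : ℝ)| * l 1
      · obtain ⟨i₀, hi₀⟩ := hE
        have hls : l s ≤ l (f i₀) := hsmin _ (hf i₀) hi₀
        have hone : l (f i₀) ≤ ∑ i, l (f i) :=
          Finset.single_le_sum (fun i _ => (hlpos _ (hf i)).le) (Finset.mem_univ i₀)
        linarith
      · push_neg at hE
        have := habs n f hf hE (s - b) (by omega)
        linarith
    -- (i) d(0,s) = l s
    have hd0s : wordDistZ (↑S) l 0 s = l s := by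
      apply le_antisymm
      · apply csInf_le
        · exact ⟨0, by
            rintro r ⟨n, f, hf, -, rfl⟩
            exact Finset.sum_nonneg fun i _ => (hlpos _ (hf i)).le⟩
        · exact ⟨1, fun _ => s, fun i => hsS, by simp, by simp⟩
      · refine le_csInf (wordSet_nonempty S l h1 hm1 0 s) ?_
        rintro r ⟨n, f, hf, hsum, rfl⟩
        by_cases hE : ∃ i, l (f i) < |((f i : ℤ) : ℝ)| * l 1
        · obtain ⟨i₀, hi₀⟩ := hE
          have hls : l s ≤ l (f i₀) := hsmin _ (hf i₀) hi₀
          have hone : l (f i₀) ≤ ∑ i, l (f i) :=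
            Finset.single_le_sum (fun i _ => (hlpos _ (hf i)).le) (Finset.mem_univ i₀)
          linarith
        · push_neg at hE
          have hb := habs n f (fun i => hf i) hE s (by omega)
          have : |((s : ℤ) : ℝ)| = (s : ℝ) := abs_of_pos (by exact_mod_cast hspos)
          rw [this] at hb
          linarith
    have hc1 : l s - l 1 < |((s - 1 : ℤ) : ℝ)| * l 1 := by
      have : |((s - 1 : ℤ) : ℝ)| = (s : ℝ) - 1 := by
        rw [abs_of_pos]
        · push_cast; ring
        · push_cast
          have : (2 : ℝ) ≤ (s : ℝ) := by exact_mod_cast hs2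
          linarith
      rw [this]
      have : (1 : ℝ) * l 1 ≤ 1 * l 1 := le_refl _
      nlinarith [l1pos, hslt]
    have hc2 : l s - l 1 < |((s - (-1) : ℤ) : ℝ)| * l 1 := by
      have : |((s - (-1) : ℤ) : ℝ)| = (s : ℝ) + 1 := by
        rw [abs_of_pos]
        · push_cast; ring
        · push_cast
          have : (2 : ℝ) ≤ (s : ℝ) := by exact_mod_cast hs2
          linarith
      rw [this]
      nlinarith [l1pos, hslt]
    obtain ⟨ε₁, hε₁pos, hε₁⟩ := gap_lemma S l hlpos h1 1 s (l s - l 1) (key2 1 hc1)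
    obtain ⟨ε₂, hε₂pos, hε₂⟩ := gap_lemma S l hlpos h1 (-1) s (l s - l 1) (key2 (-1) hc2)
    refine ⟨min ε₁ ε₂, lt_min hε₁pos hε₂pos,
      fun hI' => absurd ⟨hI', hII⟩ hexcl, fun _ => ⟨hd0s, ?_, ?_⟩⟩
    · refine le_csInf (wordSet_nonempty S l h1 hm1 1 s) fun r hr => ?_
      have := hε₁ r hr
      have := min_le_left ε₁ ε₂
      linarith
    · refine le_csInf (wordSet_nonempty S l h1 hm1 (-1) s) fun r hr => ?_
      have := hε₂ r hr
      have := min_le_right ε₁ ε₂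
      linarith
end

section
/- Let A = {0, σ₁, σ₂, σ₃} (with the σ's chosen as in the case distinction for G = ℤ, and ε₀ as in the corresponding distance-bounds lemma) and let φ : {1,2,3,4} → A be any injective function. Then in each of the cases I and II, d(φ(1),φ(4)) + min{ε₀, l(s), l(1)} ≤ d(φ(1),φ(2)) + d(φ(2),φ(3)) + d(φ(3),φ(4)). -/
open MeasureTheory Filter ProbabilityTheory Topology
open scoped ENNReal

section aux

variable {S : Set ℤ} {l : ℤ → ℝ}

lemma wdz_nonempty (h1 : (1:ℤ) ∈ S) (hm1 : (-1:ℤ) ∈ S) (x y : ℤ) :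
    {r | ∃ (n : ℕ) (f : Fin n → ℤ),
      (∀ i, f i ∈ S) ∧ y = x + ∑ i, f i ∧ r = ∑ i, l (f i)}.Nonempty := by
  rcases le_or_gt x y with h | h
  · refine ⟨_, (y - x).natAbs, fun _ => 1, fun _ => h1, ?_, rfl⟩
    simp only [Finset.sum_const, Finset.card_univ, Fintype.card_fin, nsmul_eq_mul,
      mul_one]
    omega
  · refine ⟨_, (x - y).natAbs, fun _ => -1, fun _ => hm1, ?_, rfl⟩
    simp only [Finset.sum_const, Finset.card_univ, Fintype.card_fin, nsmul_eq_mul,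
      mul_neg, mul_one]
    omega

lemma wdz_bddBelow (hlpos : ∀ t ∈ S, 0 < l t) (x y : ℤ) :
    BddBelow {r | ∃ (n : ℕ) (f : Fin n → ℤ),
      (∀ i, f i ∈ S) ∧ y = x + ∑ i, f i ∧ r = ∑ i, l (f i)} := by
  refine ⟨0, ?_⟩
  rintro r ⟨n, f, hf, -, rfl⟩
  exact Finset.sum_nonneg fun i _ => (hlpos _ (hf i)).le

lemma wdz_le_single (hlpos : ∀ t ∈ S, 0 < l t) {t : ℤ} (ht : t ∈ S) (x : ℤ) :
    wordDistZ S l x (x + t) ≤ l t := by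
  apply csInf_le (wdz_bddBelow hlpos x (x + t))
  exact ⟨1, fun _ => t, fun _ => ht, by simp, by simp⟩

lemma wdz_shift (x y : ℤ) : wordDistZ S l x y = wordDistZ S l 0 (y - x) := by
  unfold wordDistZ
  congr 1
  ext r
  constructor <;> rintro ⟨n, f, hf, hsum, rfl⟩ <;> exact ⟨n, f, hf, by omega, rfl⟩

lemma wdz_symm (hsymm : ∀ t ∈ S, -t ∈ S) (hlsymm : ∀ t ∈ S, l (-t) = l t)
    (x y : ℤ) : wordDistZ S l x y = wordDistZ S l y x := by
  have key : ∀ a b : ℤ, ∀ r : ℝ,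
      (∃ (n : ℕ) (f : Fin n → ℤ),
        (∀ i, f i ∈ S) ∧ b = a + ∑ i, f i ∧ r = ∑ i, l (f i)) →
      (∃ (n : ℕ) (f : Fin n → ℤ),
        (∀ i, f i ∈ S) ∧ a = b + ∑ i, f i ∧ r = ∑ i, l (f i)) := by
    rintro a b r ⟨n, f, hf, hsum, rfl⟩
    refine ⟨n, fun i => -(f i), fun i => hsymm _ (hf i), ?_, ?_⟩
    · have h : (∑ i, -(f i)) = -∑ i, f i := by simp
      rw [h]; omega
    · exact Finset.sum_congr rfl fun i _ => (hlsymm _ (hf i)).symm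
  unfold wordDistZ
  congr 1
  ext r
  exact ⟨key x y r, key y x r⟩

lemma wdz_triangle (h1 : (1:ℤ) ∈ S) (hm1 : (-1:ℤ) ∈ S) (hlpos : ∀ t ∈ S, 0 < l t)
    (x y z : ℤ) : wordDistZ S l x z ≤ wordDistZ S l x y + wordDistZ S l y z := by
  have hcat : ∀ a ∈ {r | ∃ (n : ℕ) (f : Fin n → ℤ),
        (∀ i, f i ∈ S) ∧ y = x + ∑ i, f i ∧ r = ∑ i, l (f i)},
      ∀ b ∈ {r | ∃ (n : ℕ) (f : Fin n → ℤ),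
        (∀ i, f i ∈ S) ∧ z = y + ∑ i, f i ∧ r = ∑ i, l (f i)},
      wordDistZ S l x z ≤ a + b := by
    rintro a ⟨n, f, hf, hsf, rfl⟩ b ⟨m, g, hg, hsg, rfl⟩
    apply csInf_le (wdz_bddBelow hlpos x z)
    refine ⟨n + m, Fin.append f g, ?_, ?_, ?_⟩
    · intro i
      induction i using Fin.addCases with
      | left j => simpa [Fin.append_left] using hf j
      | right j => simpa [Fin.append_right] using hg j
    · rw [Fin.sum_univ_add]
      simp only [Fin.append_left, Fin.append_right]
      omega
    · rw [Fin.sum_univ_add]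
      simp only [Fin.append_left, Fin.append_right]
  have hne1 := wdz_nonempty (l := l) h1 hm1 x y
  have hne2 := wdz_nonempty (l := l) h1 hm1 y z
  have h2 : wordDistZ S l x z - wordDistZ S l x y ≤ wordDistZ S l y z := by
    apply le_csInf hne2
    intro b hb
    have h3 : wordDistZ S l x z - b ≤ wordDistZ S l x y := by
      apply le_csInf hne1
      intro a ha
      linarith [hcat a ha b hb]
    linarith
  linarith

lemma wdz_lower (h1 : (1:ℤ) ∈ S) (hm1 : (-1:ℤ) ∈ S) (hlpos : ∀ t ∈ S, 0 < l t)
    {c : ℝ} (hc : ∀ t ∈ S, c ≤ l t) {x y : ℤ} (hxy : x ≠ y) :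
    c ≤ wordDistZ S l x y := by
  apply le_csInf (wdz_nonempty h1 hm1 x y)
  rintro r ⟨n, f, hf, hsum, rfl⟩
  match n, f, hf, hsum with
  | 0, f, hf, hsum => simp at hsum; omega
  | n + 1, f, hf, hsum =>
    calc c ≤ l (f 0) := hc _ (hf 0)
      _ ≤ ∑ i, l (f i) :=
        Finset.single_le_sum (fun i _ => (hlpos _ (hf i)).le) (Finset.mem_univ 0)

end aux

section main

lemma statement_15_aux {S : Set ℤ} {l : ℤ → ℝ}
    (h1 : (1 : ℤ) ∈ S) (hm1 : (-1 : ℤ) ∈ S)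
    (hsymm : ∀ t ∈ S, -t ∈ S) (hlpos : ∀ t ∈ S, 0 < l t)
    (hlsymm : ∀ t ∈ S, l (-t) = l t)
    (σ₁ σ₂ σ₃ : ℤ) (δ : ℝ)
    (key0 : ∀ b c : ℤ, (b = σ₁ ∨ b = σ₂ ∨ b = σ₃) → (c = σ₁ ∨ c = σ₂ ∨ c = σ₃) → b ≠ c →
      wordDistZ S l 0 c + δ ≤ wordDistZ S l 0 b + wordDistZ S l b c)
    (φ : Fin 4 → ℤ) (hinj : Function.Injective φ)
    (hmem : ∀ i, φ i ∈ ({0, σ₁, σ₂, σ₃} : Set ℤ)) :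
    wordDistZ S l (φ 0) (φ 3) + δ ≤
      wordDistZ S l (φ 0) (φ 1) + wordDistZ S l (φ 1) (φ 2) + wordDistZ S l (φ 2) (φ 3) := by
  classical
  have hzero : ∃ i, φ i = 0 := by
    by_contra h
    push_neg at h
    have hsub : ∀ i : Fin 4, φ i ∈ ({σ₁, σ₂, σ₃} : Finset ℤ) := by
      intro i
      have := hmem i
      simp only [Set.mem_insert_iff, Set.mem_singleton_iff] at this
      simp only [Finset.mem_insert, Finset.mem_singleton]
      rcases this with h' | h' | h' | h'
      · exact absurd h' (h i)
      all_goals tauto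
    have hcard := Finset.card_le_card_of_injOn (s := (Finset.univ : Finset (Fin 4)))
      (t := ({σ₁, σ₂, σ₃} : Finset ℤ)) φ (fun a _ => hsub a) hinj.injOn
    have h4 : (Finset.univ : Finset (Fin 4)).card = 4 := by simp
    have h3 : ({σ₁, σ₂, σ₃} : Finset ℤ).card ≤ 3 := by
      refine le_trans (Finset.card_insert_le _ _) ?_
      have h2 := Finset.card_insert_le σ₂ ({σ₃} : Finset ℤ)
      simp only [Finset.card_singleton] at h2
      omega
    omega
  obtain ⟨i, hi⟩ := hzero
  have hsig : ∀ j : Fin 4, j ≠ i → (φ j = σ₁ ∨ φ j = σ₂ ∨ φ j = σ₃) := by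
    intro j hj
    have hj' : φ j ≠ 0 := by
      intro e
      exact hj (hinj (e.trans hi.symm))
    have := hmem j
    simp only [Set.mem_insert_iff, Set.mem_singleton_iff] at this
    tauto
  have hne' : ∀ j k : Fin 4, j ≠ k → φ j ≠ φ k := fun j k h e => h (hinj e)
  have tri := wdz_triangle (S := S) (l := l) h1 hm1 hlpos
  have symm := wdz_symm (S := S) (l := l) hsymm hlsymm
  have hi4 : i = 0 ∨ i = 1 ∨ i = 2 ∨ i = 3 := by omega
  rcases hi4 with rfl | rfl | rfl | rfl
  · rw [hi]
    have k := key0 (φ 1) (φ 2) (hsig 1 (by decide)) (hsig 2 (by decide))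
      (hne' 1 2 (by decide))
    linarith [tri 0 (φ 2) (φ 3), k]
  · have k := key0 (φ 2) (φ 3) (hsig 2 (by decide)) (hsig 3 (by decide))
      (hne' 2 3 (by decide))
    rw [hi]
    linarith [tri (φ 0) 0 (φ 3), k]
  · have k := key0 (φ 1) (φ 0) (hsig 1 (by decide)) (hsig 0 (by decide))
      (hne' 1 0 (by decide))
    rw [hi]
    linarith [tri (φ 0) 0 (φ 3), k, symm 0 (φ 0), symm (φ 1) (φ 0), symm 0 (φ 1)]
  · have k := key0 (φ 2) (φ 1) (hsig 2 (by decide)) (hsig 1 (by decide))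
      (hne' 2 1 (by decide))
    rw [hi]
    linarith [tri (φ 0) (φ 1) 0, k, symm (φ 1) 0, symm (φ 2) (φ 1), symm (φ 2) 0]

end main

/-- for `A = {0, σ₁, σ₂, σ₃}` and any injective `φ : {1,2,3,4} → A`, in each
of the cases I and II, a tour `φ(1) → φ(2) → φ(3) → φ(4)` is at least
`min{ε₀, l(s), l(1)}` longer than `d(φ(1), φ(4))`. -/
theorem statement_15
    (S : Finset ℤ) (l : ℤ → ℝ)
    (h1 : (1 : ℤ) ∈ S) (hm1 : (-1 : ℤ) ∈ S) (hcard : 3 ≤ S.card) (h0S : (0 : ℤ) ∉ S)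
    (hsymm : ∀ t ∈ S, -t ∈ S) (hlpos : ∀ t ∈ S, 0 < l t) (hlsymm : ∀ t ∈ S, l (-t) = l t)
    (hexist : ∃ t ∈ S, t ≠ 1 ∧ t ≠ -1 ∧ l t < |(t : ℝ)| * l 1)
    (hd01 : wordDistZ (↑S) l 0 1 = l 1)
    (huniq : ∀ (n : ℕ) (p : Fin (n + 1) → ℤ), p 0 = 0 → p (Fin.last n) = 1 →
      (∀ i : Fin n, p i.succ - p i.castSucc ∈ S) →
      (∑ i : Fin n, l (p i.succ - p i.castSucc)) ≤ l 1 → n = 1)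
    (s σ₁ σ₂ σ₃ : ℤ)
    (hcase : CaseIZ S l s σ₁ σ₂ σ₃ ∨ CaseIIZ S l s σ₁ σ₂ σ₃)
    (ε₀ : ℝ) (hε₀ : 0 < ε₀)
    (hεI : CaseIZ S l s σ₁ σ₂ σ₃ →
      l 1 - l s + ε₀ ≤ wordDistZ (↑S) l s 1 ∧ l 1 - l s + ε₀ ≤ wordDistZ (↑S) l (-s) 1)
    (hεII : CaseIIZ S l s σ₁ σ₂ σ₃ →
      l s - l 1 + ε₀ ≤ wordDistZ (↑S) l 1 s ∧ l s - l 1 + ε₀ ≤ wordDistZ (↑S) l (-1) s) :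
    ∀ φ : Fin 4 → ℤ, Function.Injective φ → (∀ i, φ i ∈ ({0, σ₁, σ₂, σ₃} : Set ℤ)) →
      wordDistZ (↑S) l (φ 0) (φ 3) + min ε₀ (min (l s) (l 1)) ≤
        wordDistZ (↑S) l (φ 0) (φ 1) + wordDistZ (↑S) l (φ 1) (φ 2) +
          wordDistZ (↑S) l (φ 2) (φ 3) := by
  intro φ hinj hmem
  have h1' : (1 : ℤ) ∈ (↑S : Set ℤ) := h1
  have hm1' : (-1 : ℤ) ∈ (↑S : Set ℤ) := hm1
  have hsymm' : ∀ t ∈ (↑S : Set ℤ), -t ∈ (↑S : Set ℤ) := fun t ht => hsymm t ht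
  have hlpos' : ∀ t ∈ (↑S : Set ℤ), 0 < l t := fun t ht => hlpos t ht
  have hlsymm' : ∀ t ∈ (↑S : Set ℤ), l (-t) = l t := fun t ht => hlsymm t ht
  set δ := min ε₀ (min (l s) (l 1)) with hδdef
  have hδε : δ ≤ ε₀ := min_le_left _ _
  have hδs : δ ≤ l s := le_trans (min_le_right _ _) (min_le_left _ _)
  have hδ1 : δ ≤ l 1 := le_trans (min_le_right _ _) (min_le_right _ _)
  have symm := wdz_symm (S := (↑S : Set ℤ)) (l := l) hsymm' hlsymm'
  rcases hcase with hI | hII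
  · obtain ⟨hε1, hε2⟩ := hεI hI
    obtain ⟨hsS, hs1, hsm1, hmin, hlt, e1, e2, e3⟩ := hI
    rw [e1, e2, e3] at hmem
    have hsS' : (s : ℤ) ∈ (↑S : Set ℤ) := hsS
    have hnsS' : (-s : ℤ) ∈ (↑S : Set ℤ) := hsymm s hsS
    have hs0 : s ≠ 0 := fun h => h0S (h ▸ hsS)
    have hmin' : ∀ t ∈ (↑S : Set ℤ), l s ≤ l t := fun t ht => hmin t ht
    have lb : ∀ {x y : ℤ}, x ≠ y → l s ≤ wordDistZ (↑S) l x y :=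
      fun hxy => wdz_lower h1' hm1' hlpos' hmin' hxy
    have ub_s : wordDistZ (↑S) l 0 s ≤ l s := by
      simpa using wdz_le_single hlpos' hsS' 0
    have ub_ns : wordDistZ (↑S) l 0 (-s) ≤ l s := by
      simpa [hlsymm s hsS] using wdz_le_single hlpos' hnsS' 0
    refine statement_15_aux h1' hm1' hsymm' hlpos' hlsymm' s (-s) 1 δ ?_ φ hinj hmem
    rintro b c (rfl | rfl | rfl) (rfl | rfl | rfl) hbc
    · exact absurd rfl hbc
    · linarith [ub_ns, lb (show (0:ℤ) ≠ b from by omega), lb (show b ≠ -b from by omega)]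
    · linarith [hd01, lb (show (0:ℤ) ≠ b from by omega), hε1]
    · linarith [ub_s, lb (show (0:ℤ) ≠ -c from by omega), lb (show -c ≠ c from by omega)]
    · exact absurd rfl hbc
    · linarith [hd01, lb (show (0:ℤ) ≠ -s from by omega), hε2]
    · linarith [ub_s, hd01, symm 1 c, hε1]
    · linarith [ub_ns, hd01, symm 1 (-s), hε2]
    · exact absurd rfl hbc
  · obtain ⟨hε1, hε2⟩ := hεII hII
    obtain ⟨hno, hspos, hsS, hs1, hsl, hminl, e1, e2, e3⟩ := hII
    rw [e1, e2, e3] at hmem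
    have hsS' : (s : ℤ) ∈ (↑S : Set ℤ) := hsS
    have hs0 : s ≠ 0 := by omega
    have hr1 : ∀ t ∈ (↑S : Set ℤ), l 1 ≤ l t := by
      intro t ht
      obtain ⟨t₀, ht₀S, ht₀min⟩ := S.exists_min_image l ⟨1, h1⟩
      have h10 : l 1 ≤ l t₀ := by
        by_cases e : t₀ = 1
        · rw [e]
        · by_cases e' : t₀ = -1
          · rw [e', hlsymm 1 h1]
          · push_neg at hno
            exact hno t₀ ht₀S e e' ht₀min
      exact le_trans h10 (ht₀min t ht)
    have hls1 : l 1 ≤ l s := hr1 s hsS'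
    have lb : ∀ {x y : ℤ}, x ≠ y → l 1 ≤ wordDistZ (↑S) l x y :=
      fun hxy => wdz_lower h1' hm1' hlpos' hr1 hxy
    have ub_m1 : wordDistZ (↑S) l 0 (-1) ≤ l 1 := by
      simpa [hlsymm 1 h1] using wdz_le_single hlpos' hm1' 0
    have ub_s : wordDistZ (↑S) l 0 s ≤ l s := by
      simpa using wdz_le_single hlpos' hsS' 0
    refine statement_15_aux h1' hm1' hsymm' hlpos' hlsymm' 1 (-1) s δ ?_ φ hinj hmem
    rintro b c (rfl | rfl | rfl) (rfl | rfl | rfl) hbc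
    · exact absurd rfl hbc
    · linarith [ub_m1, hd01, lb (show (1:ℤ) ≠ -1 from by omega)]
    · linarith [ub_s, hd01, hε1]
    · linarith [hd01, lb (show (0:ℤ) ≠ -1 from by omega), lb (show (-1:ℤ) ≠ 1 from by omega)]
    · exact absurd rfl hbc
    · linarith [ub_s, lb (show (0:ℤ) ≠ -1 from by omega), hε2]
    · linarith [hd01, lb (show (0:ℤ) ≠ b from by omega), hε1, symm 1 b]
    · linarith [ub_m1, lb (show (0:ℤ) ≠ b from by omega), hε2, symm (-1) b]
    · exact absurd rfl hbc
end
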